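/- arXiv:2411.18972 — 3 statements merged into one kernel-verified Lean document; each statement's English description precedes it below -/
import Mathlib

section
/- Let f_j(t) be the matching-generating polynomial of a path on j vertices. Then f_j has exactly ⌊j/2⌋ distinct real roots, namely t = −1/(4 cos²(kπ/(j+1))) for integers 1 ≤ k < (j+1)/2. -/
/-!
The identity `(2x)^j f_j(-1/(4x²)) = U_j(x)` turns the roots `cos (kπ/(j+1))` of the Chebyshev
polynomial `U_j` with `1 ≤ k ≤ j/2` into `⌊j/2⌋` roots of `f_j`, pairwise distinct because `cos`
is injective on `[0, π/2)` and positive there. Since `deg f_j ≤ ⌊j/2⌋`, these are all the roots.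
That the matching polynomial of the path is `f_j` comes from encoding a matching by the lower
endpoints of its edges: these form a subset of `{0, …, j-2}` without two consecutive elements, and
such subsets satisfy the Fibonacci recursion according to whether the largest index is used.
-/

open Classical Polynomial

/-- The matching-generating polynomial `M_G(t) = Σ_{matchings S of G} t^{|S|}` of a finite
graph `G`, where a matching is a set of pairwise disjoint edges. -/
noncomputable def matchPoly {V : Type*} [Fintype V] (G : SimpleGraph V) : Polynomial ℚ :=
  ∑ S ∈ Finset.univ.filter (fun S : Finset (Sym2 V) =>
      ↑S ⊆ G.edgeSet ∧ (S : Set (Sym2 V)).Pairwise (fun e f => ∀ v, v ∈ e → v ∉ f)),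
    Polynomial.X ^ S.card

open Finset SimpleGraph

theorem Sym2.mem_iff_eq_inf_or_eq_sup {α : Type*} [LinearOrder α] {a : α} {s : Sym2 α} :
    a ∈ s ↔ a = s.inf ∨ a = s.sup := by
  induction s with | _ x y
  rcases le_total x y with h | h <;> simp [h, or_comm]

def sparseSubsets (n : ℕ) : Finset (Finset ℕ) :=
  (range n).powerset.filter fun T => ∀ i ∈ T, i + 1 ∉ T

theorem mem_sparseSubsets {n : ℕ} {T : Finset ℕ} :
    T ∈ sparseSubsets n ↔ (∀ i ∈ T, i < n) ∧ ∀ i ∈ T, i + 1 ∉ T := by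
  simp [sparseSubsets, subset_iff]

theorem filter_notMem_sparseSubsets (n : ℕ) :
    (sparseSubsets (n + 1)).filter (n ∉ ·) = sparseSubsets n := by
  ext T
  simp only [mem_filter, mem_sparseSubsets]
  grind

theorem sum_sparseSubsets_add_two {M : Type*} [AddCommMonoid M] (f : Finset ℕ → M) (n : ℕ) :
    ∑ T ∈ sparseSubsets (n + 2), f T
      = ∑ T ∈ sparseSubsets (n + 1), f T + ∑ T ∈ sparseSubsets n, f (insert (n + 1) T) := by
  rw [← sum_filter_not_add_sum_filter _ (n + 1 ∈ ·), filter_notMem_sparseSubsets]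
  congr 1
  refine sum_nbij' (erase · (n + 1)) (insert (n + 1)) ?_ ?_ ?_ ?_ ?_
  · intro T hT
    simp only [mem_filter, mem_sparseSubsets, mem_erase] at hT ⊢
    grind
  · intro T hT
    simp only [mem_filter, mem_sparseSubsets, mem_insert] at hT ⊢
    grind
  · intro T hT
    exact insert_erase (mem_filter.1 hT).2
  · intro T hT
    exact erase_insert fun h => by have := (mem_sparseSubsets.1 hT).1 _ h; omega
  · intro T hT
    rw [insert_erase (mem_filter.1 hT).2]

section pathGraph

variable {j : ℕ}

theorem mem_edgeSet_pathGraph {e : Sym2 (Fin j)} :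
    e ∈ (pathGraph j).edgeSet ↔ (e.sup : ℕ) = e.inf + 1 := by
  induction e with | _ u v
  simp only [mem_edgeSet, pathGraph_adj, Sym2.sup_mk, Sym2.inf_mk, Fin.coe_max, Fin.coe_min]
  omega

theorem injOn_inf_edgeSet_pathGraph :
    Set.InjOn (fun e : Sym2 (Fin j) => (e.inf : ℕ)) (pathGraph j).edgeSet := by
  intro e he f hf h
  rw [mem_edgeSet_pathGraph] at he hf
  rw [← Sym2.inf_eq_inf_and_sup_eq_sup, Fin.ext_iff, Fin.ext_iff]
  simp only at h
  omega

theorem exists_mem_edgeSet_pathGraph_inf_eq {i : ℕ} (h : i + 1 < j) :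
    ∃ e ∈ (pathGraph j).edgeSet, (e.inf : ℕ) = i :=
  ⟨s(⟨i, by omega⟩, ⟨i + 1, h⟩), by simp [pathGraph_adj]⟩

theorem disjoint_edges_pathGraph_iff {e f : Sym2 (Fin j)}
    (he : e ∈ (pathGraph j).edgeSet) (hf : f ∈ (pathGraph j).edgeSet) :
    (∀ v ∈ e, v ∉ f) ↔
      (e.inf : ℕ) ≠ f.inf ∧ (e.inf : ℕ) + 1 ≠ f.inf ∧ (f.inf : ℕ) + 1 ≠ e.inf := by
  rw [mem_edgeSet_pathGraph] at he hf
  simp only [Sym2.mem_iff_eq_inf_or_eq_sup, forall_eq_or_imp, forall_eq]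
  simp only [Fin.ext_iff]
  omega

theorem image_inf_mem_sparseSubsets {S : Finset (Sym2 (Fin j))}
    (hS : ↑S ⊆ (pathGraph j).edgeSet)
    (hdisj : (S : Set (Sym2 (Fin j))).Pairwise fun e f => ∀ v ∈ e, v ∉ f) :
    S.image (fun e => (e.inf : ℕ)) ∈ sparseSubsets (j - 1) := by
  simp only [mem_sparseSubsets, mem_image, forall_exists_index, and_imp,
    forall_apply_eq_imp_iff₂, not_exists, not_and]
  refine ⟨fun e he => ?_, fun e he f hf hef => ?_⟩
  · have := mem_edgeSet_pathGraph.1 (hS he)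
    have := e.sup.isLt
    omega
  · have hne : e ≠ f := by rintro rfl; omega
    have := (disjoint_edges_pathGraph_iff (hS he) (hS hf)).1 (hdisj he hf hne)
    omega

theorem pairwise_disjoint_of_mem_sparseSubsets {T : Finset ℕ} (hT : T ∈ sparseSubsets (j - 1)) :
    {e : Sym2 (Fin j) | e ∈ (pathGraph j).edgeSet ∧ (e.inf : ℕ) ∈ T}.Pairwise
      fun e f => ∀ v ∈ e, v ∉ f := by
  rintro e ⟨he, heT⟩ f ⟨hf, hfT⟩ hne
  rw [disjoint_edges_pathGraph_iff he hf]
  refine ⟨fun h => hne (injOn_inf_edgeSet_pathGraph he hf h), fun h => ?_, fun h => ?_⟩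
  · exact (mem_sparseSubsets.1 hT).2 _ heT (h ▸ hfT)
  · exact (mem_sparseSubsets.1 hT).2 _ hfT (h ▸ heT)

theorem matchPoly_pathGraph_eq_sum_sparseSubsets :
    matchPoly (pathGraph j) = ∑ T ∈ sparseSubsets (j - 1), X ^ #T := by
  rw [matchPoly]
  refine sum_nbij' (fun S => S.image fun e => (e.inf : ℕ))
    (fun T => univ.filter fun e => e ∈ (pathGraph j).edgeSet ∧ (e.inf : ℕ) ∈ T) ?_ ?_ ?_ ?_ ?_
  · intro S hS
    simp only [mem_filter, mem_univ, true_and] at hS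
    exact image_inf_mem_sparseSubsets hS.1 hS.2
  · intro T hT
    simp only [mem_filter, mem_univ, true_and, coe_filter]
    exact ⟨fun e he => he.1, pairwise_disjoint_of_mem_sparseSubsets hT⟩
  · intro S hS
    simp only [mem_filter, mem_univ, true_and] at hS
    ext e
    simp only [mem_filter, mem_univ, true_and, mem_image]
    constructor
    · rintro ⟨he, f, hf, hfe⟩
      rwa [← injOn_inf_edgeSet_pathGraph (hS.1 hf) he hfe]
    · exact fun he => ⟨hS.1 he, e, he, rfl⟩
  · intro T hT
    ext i
    simp only [mem_filter, mem_univ, true_and, mem_image]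
    constructor
    · rintro ⟨e, ⟨-, he⟩, rfl⟩
      exact he
    intro hi
    have := (mem_sparseSubsets.1 hT).1 i hi
    obtain ⟨e, he, rfl⟩ := exists_mem_edgeSet_pathGraph_inf_eq (show i + 1 < j by omega)
    exact ⟨e, ⟨he, hi⟩, rfl⟩
  · intro S hS
    simp only [mem_filter, mem_univ, true_and] at hS
    rw [card_image_of_injOn (injOn_inf_edgeSet_pathGraph.mono hS.1)]

end pathGraph

/-- The polynomial `f_j` of the paper. -/
noncomputable def fibPoly (R : Type*) [CommSemiring R] : ℕ → R[X]
  | 0 => 1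
  | 1 => 1
  | n + 2 => fibPoly R (n + 1) + X * fibPoly R n

section fibPoly

variable (R : Type*) [CommSemiring R]

theorem fibPoly_add_two (n : ℕ) : fibPoly R (n + 2) = fibPoly R (n + 1) + X * fibPoly R n := rfl

theorem sum_sparseSubsets_X_pow (n : ℕ) :
    ∑ T ∈ sparseSubsets n, (X : R[X]) ^ #T = fibPoly R (n + 1) := by
  induction n using Nat.twoStepInduction with
  | zero =>
    rw [show sparseSubsets 0 = {∅} by decide]
    simp [fibPoly]
  | one =>
    rw [show sparseSubsets 1 = {∅, {0}} by decide]
    simp [fibPoly]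
  | more n ih₀ ih₁ =>
    rw [sum_sparseSubsets_add_two, fibPoly_add_two R (n + 1), ← ih₁, ← ih₀, mul_sum]
    congr 1
    refine sum_congr rfl fun T hT => ?_
    rw [card_insert_of_notMem fun h => by have := (mem_sparseSubsets.1 hT).1 _ h; omega, pow_succ']

theorem natDegree_fibPoly_le (n : ℕ) : (fibPoly R n).natDegree ≤ n / 2 := by
  induction n using Nat.twoStepInduction with
  | zero => simp [fibPoly]
  | one => simp [fibPoly]
  | more n ih₀ ih₁ =>
    rw [fibPoly_add_two]
    refine natDegree_add_le_of_degree_le (ih₁.trans (by omega)) (natDegree_mul_le.trans ?_)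
    have := natDegree_X_le (R := R)
    omega

theorem eval_zero_fibPoly (n : ℕ) : (fibPoly R n).eval 0 = 1 := by
  induction n using Nat.twoStepInduction with
  | zero => simp [fibPoly]
  | one => simp [fibPoly]
  | more n ih₀ ih₁ => simp [fibPoly_add_two, ih₁]

theorem fibPoly_ne_zero [Nontrivial R] (n : ℕ) : fibPoly R n ≠ 0 := fun h => by
  simpa [h] using eval_zero_fibPoly R n

theorem pow_mul_aeval_fibPoly {K : Type*} [Field K] [Algebra R K] {x : K} (hx : 2 * x ≠ 0)
    (n : ℕ) : (2 * x) ^ n * aeval (-1 / (4 * x ^ 2)) (fibPoly R n) = (Chebyshev.U K n).eval x := by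
  induction n using Nat.twoStepInduction with
  | zero => simp [fibPoly]
  | one => simp [fibPoly]
  | more n ih₀ ih₁ =>
    push_cast at ih₁ ⊢
    rw [Chebyshev.U_add_two, fibPoly_add_two R, eval_sub, eval_mul, ← ih₀, ← ih₁]
    have key : (2 * x) ^ 2 * (-1 / (4 * x ^ 2)) = -1 := by
      rw [show 4 * x ^ 2 = (2 * x) ^ 2 by ring, mul_div, mul_neg_one, neg_div,
        div_self (pow_ne_zero 2 hx)]
    simp only [map_add, map_mul, aeval_X, eval_mul, eval_X, eval_ofNat]
    linear_combination (2 * x) ^ n * aeval (-1 / (4 * x ^ 2)) (fibPoly R n) * key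

end fibPoly

-- At `j = 0` the index `j - 1` truncates to `0`; this is harmless since `f_0 = f_1`.
theorem matchPoly_pathGraph (j : ℕ) : matchPoly (pathGraph j) = fibPoly ℚ j := by
  rw [matchPoly_pathGraph_eq_sum_sparseSubsets, sum_sparseSubsets_X_pow]
  cases j <;> rfl

theorem Polynomial.setOf_aeval_eq_zero_eq_rootSet {K L : Type*} [Field K] [CommRing L]
    [IsDomain L] [Algebra K L] {p : K[X]} (hp : p ≠ 0) : {x : L | aeval x p = 0} = p.rootSet L := by
  ext x
  simp [mem_rootSet, hp]

open Real

noncomputable def pathRoot (j k : ℕ) : ℝ := -1 / (4 * cos (k * π / (j + 1)) ^ 2)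

theorem mul_pi_div_mem_Ico {j k : ℕ} (hk : k ≤ j / 2) : k * π / (j + 1) ∈ Set.Ico 0 (π / 2) := by
  have hk' : (2 * k : ℝ) < j + 1 := by exact_mod_cast (by omega : 2 * k < j + 1)
  refine ⟨by positivity, ?_⟩
  rw [div_lt_div_iff₀ (by positivity) two_pos]
  nlinarith [pi_pos]

theorem aeval_pathRoot_fibPoly (R : Type*) [CommSemiring R] [Algebra R ℝ] {j k : ℕ}
    (hk₀ : 1 ≤ k) (hk : k ≤ j / 2) : aeval (pathRoot j k) (fibPoly R j) = 0 := by
  have hθ₀ : 0 < k * π / (j + 1) := by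
    have : (0 : ℝ) < k := by exact_mod_cast hk₀
    positivity
  have hθ := (mul_pi_div_mem_Ico hk).2
  have hcos : 0 < cos (k * π / (j + 1)) := cos_pos_of_mem_Ioo ⟨by linarith, hθ⟩
  have hsin : 0 < sin (k * π / (j + 1)) := sin_pos_of_pos_of_lt_pi hθ₀ (by linarith)
  have hU : (Chebyshev.U ℝ j).eval (cos (k * π / (j + 1))) = 0 := by
    have hUcos := Chebyshev.U_real_cos (k * π / (j + 1)) j
    rw [Int.cast_natCast, mul_div_cancel₀ _ (by positivity), sin_nat_mul_pi] at hUcos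
    exact (mul_eq_zero.1 hUcos).resolve_right hsin.ne'
  rw [← pow_mul_aeval_fibPoly R (by positivity) j, mul_eq_zero] at hU
  exact hU.resolve_left (by positivity)

theorem injOn_pathRoot (j : ℕ) : Set.InjOn (pathRoot j) (Set.Iic (j / 2)) := by
  intro a ha b hb hab
  have hθ : ∀ k ∈ Set.Iic (j / 2), k * π / (j + 1) ∈ Set.Icc 0 π ∧ 0 ≤ cos (k * π / (j + 1)) := by
    intro k hk
    obtain ⟨h₀, h₁⟩ := mul_pi_div_mem_Ico hk
    exact ⟨⟨h₀, by linarith [pi_pos]⟩, cos_nonneg_of_mem_Icc ⟨by linarith [pi_pos], h₁.le⟩⟩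
  have hsq : cos (a * π / (j + 1)) ^ 2 = cos (b * π / (j + 1)) ^ 2 := by
    simpa [pathRoot, div_eq_mul_inv] using hab
  have := injOn_cos (hθ a ha).1 (hθ b hb).1 ((sq_eq_sq₀ (hθ a ha).2 (hθ b hb).2).1 hsq)
  field_simp at this
  exact_mod_cast this

theorem ncard_image_pathRoot_Icc (j : ℕ) : (pathRoot j '' Set.Icc 1 (j / 2)).ncard = j / 2 := by
  rw [((injOn_pathRoot j).mono Set.Icc_subset_Iic_self).ncard_image, Set.ncard_Icc_nat]
  omega

theorem rootSet_fibPoly (R : Type*) [Field R] [Algebra R ℝ] (j : ℕ) :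
    (fibPoly R j).rootSet ℝ = pathRoot j '' Set.Icc 1 (j / 2) := by
  refine (Set.eq_of_subset_of_ncard_le ?_ ?_ (rootSet_finite _ _)).symm
  · rintro _ ⟨k, hk, rfl⟩
    exact (mem_rootSet_of_ne (fibPoly_ne_zero R j)).2 (aeval_pathRoot_fibPoly R hk.1 hk.2)
  · rw [ncard_image_pathRoot_Icc]
    exact (ncard_rootSet_le _ _).trans (natDegree_fibPoly_le R j)

theorem image_pathRoot_Icc (j : ℕ) :
    pathRoot j '' Set.Icc 1 (j / 2) = {t | ∃ k : ℕ, 1 ≤ k ∧ 2 * k < j + 1 ∧ t = pathRoot j k} := by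
  ext t
  simp only [Set.mem_image, Set.mem_Icc, Set.mem_ofPred_eq]
  constructor
  · rintro ⟨k, hk, rfl⟩
    exact ⟨k, hk.1, by omega, rfl⟩
  · rintro ⟨k, hk₀, hk, rfl⟩
    exact ⟨k, ⟨hk₀, by omega⟩, rfl⟩

/-- The matching-generating polynomial `f_j` of a path on `j` vertices has exactly `⌊j/2⌋`
distinct real roots, namely `t = −1/(4 cos²(kπ/(j+1)))` for integers `1 ≤ k < (j+1)/2`. -/
theorem stmt11 (j : ℕ) :
    {t : ℝ | Polynomial.aeval t (matchPoly (SimpleGraph.pathGraph j)) = 0}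
      = {t : ℝ | ∃ k : ℕ, 1 ≤ k ∧ 2 * k < j + 1 ∧
          t = -1 / (4 * Real.cos (k * Real.pi / (j + 1)) ^ 2)} ∧
    {t : ℝ | Polynomial.aeval t (matchPoly (SimpleGraph.pathGraph j)) = 0}.ncard = j / 2 := by
  rw [matchPoly_pathGraph, setOf_aeval_eq_zero_eq_rootSet (fibPoly_ne_zero ℚ j), rootSet_fibPoly]
  exact ⟨image_pathRoot_Icc j, ncard_image_pathRoot_Icc j⟩
end

section
/- A finite graph G that is a disjoint union of paths is determined up to isomorphism by the pair (|V(G)|, M_G(t)) where M_G is its matching-generating polynomial. That is, if G and H are disjoint unions of paths with |V(G)| = |V(H)| and M_G = M_H, then G ≅ H. -/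
open Classical Polynomial

/-- A graph is a disjoint union of paths if every connected component is isomorphic
(as an induced subgraph) to a path graph. -/
def IsPathUnion {V : Type*} (G : SimpleGraph V) : Prop :=
  ∀ c : G.ConnectedComponent, ∃ m : ℕ,
    Nonempty ((G.induce c.supp) ≃g SimpleGraph.pathGraph m)

/-!
Removing an end vertex of the path `P_n` gives `M_{n+2} = M_{n+1} + t M_n`, and the same
recurrence shows that the substitution `t = -q / (1 + q)²` turns `(1 + q)ⁿ M_{P_n}` into the
`q`-integer `[n + 1]_q = 1 + q + ⋯ + qⁿ`. As `M` is multiplicative over components, the number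
of vertices and `M_G` therefore determine `∏_c [n_c + 1]_q` over the components `P_{n_c}` of `G`.
A primitive `k`-th root of unity is a simple root of `[m]_q` exactly when `k ∣ m`, so this
product knows, for every `k ≥ 2`, how many of the `n_c + 1 ≥ 2` are divisible by `k`; these
counts determine the multiset of the `n_c + 1`: its largest value `B` occurs as often as there
are multiples of `B`, and removing these copies leaves counts of the same kind.
-/

open Finset SimpleGraph

section Matchings

variable {V W : Type*}

def IsEdgeMatching (G : SimpleGraph V) (S : Finset (Sym2 V)) : Prop :=
  ↑S ⊆ G.edgeSet ∧ (S : Set (Sym2 V)).Pairwise fun e f => ∀ v ∈ e, v ∉ f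

lemma matchPoly_eq_sum_isEdgeMatching [Fintype V] (G : SimpleGraph V) :
    matchPoly G = ∑ S ∈ univ.filter (IsEdgeMatching G), X ^ #S := by
  unfold matchPoly IsEdgeMatching
  congr

lemma Sym2.mem_range_map_iff {f : V → W} {e : Sym2 W} :
    e ∈ Set.range (Sym2.map f) ↔ ∀ w ∈ e, w ∈ Set.range f := by
  induction e with
  | _ a b =>
    constructor
    · rintro ⟨e', he'⟩ w hw
      obtain ⟨v, -, rfl⟩ := Sym2.mem_map.1 (he' ▸ hw)
      exact ⟨v, rfl⟩
    · intro h
      obtain ⟨a', rfl⟩ := h a (Sym2.mem_mk_left a b)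
      obtain ⟨b', rfl⟩ := h b (Sym2.mem_mk_right _ b)
      exact ⟨s(a', b'), Sym2.map_mk f a' b'⟩

namespace IsEdgeMatching

variable {G : SimpleGraph V} {H : SimpleGraph W} {S T : Finset (Sym2 V)}

lemma mono (hS : IsEdgeMatching G S) (hTS : T ⊆ S) : IsEdgeMatching G T :=
  ⟨(coe_subset.2 hTS).trans hS.1, hS.2.mono (coe_subset.2 hTS)⟩

lemma insert (hS : IsEdgeMatching G S) {e : Sym2 V} (he : e ∈ G.edgeSet)
    (hdisj : ∀ f ∈ S, ∀ v ∈ e, v ∉ f) : IsEdgeMatching G (insert e S) := by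
  refine ⟨?_, ?_⟩
  · rw [coe_insert]
    exact Set.insert_subset he hS.1
  · rw [coe_insert, Set.pairwise_insert]
    exact ⟨hS.2, fun f hf _ => ⟨hdisj f hf, fun v hvf hve => hdisj f hf v hve hvf⟩⟩

lemma image_embedding (f : G ↪g H) (hS : IsEdgeMatching G S) :
    IsEdgeMatching H (S.image (Sym2.map f)) := by
  refine ⟨?_, ?_⟩
  · intro _ hx
    obtain ⟨e, he, rfl⟩ := mem_image.1 hx
    exact f.map_mem_edgeSet_iff.2 (hS.1 he)
  · intro _ hx _ hx' hne w hw hw'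
    obtain ⟨e, he, rfl⟩ := mem_image.1 hx
    obtain ⟨e', he', rfl⟩ := mem_image.1 hx'
    obtain ⟨v, hv, rfl⟩ := Sym2.mem_map.1 hw
    obtain ⟨v', hv', hvv'⟩ := Sym2.mem_map.1 hw'
    rw [f.injective hvv'] at hv'
    exact hS.2 he he' (fun h => hne (h ▸ rfl)) v hv hv'

lemma preimage_embedding (f : G ↪g H) {T : Finset (Sym2 W)} (hT : IsEdgeMatching H T) :
    IsEdgeMatching G (T.preimage (Sym2.map f) (Sym2.map.injective f.injective).injOn) := by
  refine ⟨fun e he => ?_, fun e he e' he' hne v hv hv' => ?_⟩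
  · exact f.map_mem_edgeSet_iff.1 (hT.1 (mem_preimage.1 he))
  · exact hT.2 (mem_preimage.1 he) (mem_preimage.1 he')
      (fun h => hne (Sym2.map.injective f.injective h)) (f v) (Sym2.mem_map.2 ⟨v, hv, rfl⟩)
      (Sym2.mem_map.2 ⟨v, hv', rfl⟩)

end IsEdgeMatching

variable [Fintype V] [Fintype W]

lemma matchPoly_eq_sum_of_embedding {G : SimpleGraph V} {H : SimpleGraph W} (f : G ↪g H)
    {p : W → Prop} (hf : ∀ w, w ∈ Set.range f ↔ p w) :
    matchPoly G = ∑ T ∈ univ.filter (fun T => IsEdgeMatching H T ∧ ∀ e ∈ T, ∀ w ∈ e, p w),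
      X ^ #T := by
  have hinj : Function.Injective (Sym2.map f) := Sym2.map.injective f.injective
  have himage : univ.filter (fun T => IsEdgeMatching H T ∧ ∀ e ∈ T, ∀ w ∈ e, p w) =
      (univ.filter (IsEdgeMatching G)).image (image (Sym2.map f)) := by
    ext T
    simp only [mem_filter, mem_univ, true_and, mem_image]
    constructor
    · rintro ⟨hT, hp⟩
      refine ⟨_, hT.preimage_embedding f, ?_⟩
      rw [image_preimage, filter_true_of_mem]
      intro e he
      exact Sym2.mem_range_map_iff.2 fun w hw => (hf w).2 (hp e he w hw)
    · rintro ⟨S, hS, rfl⟩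
      refine ⟨hS.image_embedding f, fun e he w hw => (hf w).1 ?_⟩
      obtain ⟨e', -, rfl⟩ := mem_image.1 he
      exact Sym2.mem_range_map_iff.1 ⟨e', rfl⟩ w hw
  rw [himage, sum_image fun S _ S' _ h => image_injective hinj h, matchPoly_eq_sum_isEdgeMatching]
  exact sum_congr rfl fun S _ => by rw [card_image_of_injective S hinj]

lemma matchPoly_congr {G : SimpleGraph V} {H : SimpleGraph W} (e : G ≃g H) :
    matchPoly G = matchPoly H := by
  rw [matchPoly_eq_sum_of_embedding e.toEmbedding (p := fun _ => True)
    fun w => iff_of_true ⟨e.symm w, e.apply_symm_apply w⟩ trivial]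
  simp only [imp_true_iff, and_true, matchPoly_eq_sum_isEdgeMatching]

lemma matchPoly_of_subsingleton [Subsingleton V] (G : SimpleGraph V) : matchPoly G = 1 := by
  have hG : G.edgeSet = ∅ := by
    rw [Subsingleton.elim G ⊥, edgeSet_bot]
  have : univ.filter (IsEdgeMatching G) = {∅} := by
    ext S
    simp only [mem_filter, mem_univ, true_and, mem_singleton, IsEdgeMatching, hG,
      Set.subset_empty_iff, coe_eq_empty]
    constructor
    · exact And.left
    · rintro rfl
      simp
  rw [matchPoly_eq_sum_isEdgeMatching, this, sum_singleton, card_empty, pow_zero]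

end Matchings

section Pendant

variable {V V₁ V₂ : Type*} [Fintype V] [Fintype V₁] [Fintype V₂]

lemma matchPoly_eq_add_of_pendant {G : SimpleGraph V} {G₁ : SimpleGraph V₁}
    {G₂ : SimpleGraph V₂} {v w : V} (hv : ∀ u, G.Adj v u ↔ u = w)
    (f : G₁ ↪g G) (hf : ∀ u, u ∈ Set.range f ↔ u ≠ v)
    (g : G₂ ↪g G) (hg : ∀ u, u ∈ Set.range g ↔ u ≠ v ∧ u ≠ w) :
    matchPoly G = matchPoly G₁ + X * matchPoly G₂ := by
  have hvw : s(v, w) ∈ G.edgeSet := (hv w).2 rfl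
  rw [matchPoly_eq_sum_of_embedding f hf, matchPoly_eq_sum_of_embedding g hg,
    matchPoly_eq_sum_isEdgeMatching, ← sum_filter_not_add_sum_filter _ (s(v, w) ∈ ·),
    filter_filter, filter_filter, mul_sum]
  refine congrArg₂ (· + ·) ?_ ?_
  · refine sum_congr ?_ fun _ _ => rfl
    ext S
    simp only [mem_filter, mem_univ, true_and, and_congr_right_iff]
    refine fun hS => ⟨?_, fun h hS_vw => h _ hS_vw v (Sym2.mem_mk_left v w) rfl⟩
    rintro hS_vw e he u hu rfl
    obtain ⟨u', rfl⟩ := Sym2.mem_iff_exists.1 hu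
    rw [(hv u').1 (hS.1 he)] at he
    exact hS_vw he
  · refine sum_nbij' (·.erase s(v, w)) (insert s(v, w)) ?_ ?_ ?_ ?_ ?_
    · simp only [mem_filter, mem_univ, true_and]
      rintro S ⟨hS, hS_vw⟩
      refine ⟨hS.mono (erase_subset _ _), fun e he u hu => ?_⟩
      have := hS.2 (mem_of_mem_erase he) hS_vw (ne_of_mem_erase he) u hu
      simp only [Sym2.mem_iff, not_or] at this
      exact this
    · simp only [mem_filter, mem_univ, true_and]
      rintro T ⟨hT, hT_avoid⟩
      refine ⟨hT.insert hvw fun e he u hu hue => ?_, mem_insert_self _ _⟩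
      rcases Sym2.mem_iff.1 hu with rfl | rfl
      exacts [(hT_avoid e he u hue).1 rfl, (hT_avoid e he u hue).2 rfl]
    · exact fun S hS => insert_erase (mem_filter.1 hS).2.2
    · intro T hT
      simp only [mem_filter, mem_univ, true_and] at hT
      exact erase_insert fun h => (hT.2 _ h v (Sym2.mem_mk_left v w)).1 rfl
    · intro S hS
      rw [← card_erase_add_one (mem_filter.1 hS).2.2, pow_succ, mul_comm]

end Pendant

section Paths

def pathGraphSuccEmbedding (n : ℕ) : pathGraph n ↪g pathGraph (n + 1) where
  toEmbedding := Fin.succEmb n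
  map_rel_iff' := by simp [pathGraph_adj]

lemma matchPoly_pathGraph_zero : matchPoly (pathGraph 0) = 1 :=
  matchPoly_of_subsingleton _

lemma matchPoly_pathGraph_one : matchPoly (pathGraph 1) = 1 :=
  matchPoly_of_subsingleton _

lemma matchPoly_pathGraph_add_two (n : ℕ) :
    matchPoly (pathGraph (n + 2)) =
      matchPoly (pathGraph (n + 1)) + X * matchPoly (pathGraph n) := by
  refine matchPoly_eq_add_of_pendant (v := 0) (w := 1) ?_ (pathGraphSuccEmbedding (n + 1)) ?_
    ((pathGraphSuccEmbedding n).trans (pathGraphSuccEmbedding (n + 1))) ?_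
  · intro u
    rw [pathGraph_adj, Fin.ext_iff]
    simp only [Fin.val_zero, Fin.val_one]
    omega
  · intro u
    exact Fin.exists_succ_eq
  · intro u
    refine ⟨?_, fun ⟨h0, h1⟩ => ?_⟩
    · rintro ⟨a, rfl⟩
      exact ⟨Fin.succ_ne_zero _, Fin.succ_succ_ne_one a⟩
    · rw [Ne, Fin.ext_iff, Fin.val_zero] at h0
      rw [Ne, Fin.ext_iff, Fin.val_one] at h1
      exact ⟨⟨u - 2, by omega⟩, Fin.ext (by simp [pathGraphSuccEmbedding]; omega)⟩

end Paths

section Fibers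

variable {ι W : Type*} [Fintype ι] {H : SimpleGraph W} {π : W → ι}

lemma IsEdgeMatching.biUnion_univ {T : ι → Finset (Sym2 W)} (hT : ∀ i, IsEdgeMatching H (T i))
    (hπ : ∀ i, ∀ e ∈ T i, ∀ w ∈ e, π w = i) : IsEdgeMatching H (univ.biUnion T) := by
  refine ⟨fun e he => ?_, fun e he e' he' hne w hw hw' => ?_⟩
  · obtain ⟨i, -, he⟩ := mem_biUnion.1 he
    exact (hT i).1 he
  · obtain ⟨i, -, he⟩ := mem_biUnion.1 he
    obtain ⟨j, -, he'⟩ := mem_biUnion.1 he'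
    obtain rfl : i = j := (hπ i e he w hw).symm.trans (hπ j e' he' w hw')
    exact (hT i).2 he he' hne w hw hw'

lemma biUnion_filter_fiber [∀ i, DecidablePred fun e : Sym2 W => ∀ w ∈ e, π w = i]
    (hπ : ∀ a b, H.Adj a b → π a = π b) {S : Finset (Sym2 W)} (hS : ↑S ⊆ H.edgeSet) :
    univ.biUnion (fun i => S.filter fun e => ∀ w ∈ e, π w = i) = S := by
  ext e
  simp only [mem_biUnion, mem_univ, true_and, mem_filter]
  refine ⟨fun ⟨_, he, _⟩ => he, fun he => ?_⟩
  have hadj := hS he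
  induction e with
  | _ a b =>
    refine ⟨π a, he, fun w hw => ?_⟩
    rcases Sym2.mem_iff.1 hw with rfl | rfl
    exacts [rfl, (hπ _ _ hadj).symm]

variable [Fintype W]

lemma matchPoly_eq_prod_sum_fiber (hπ : ∀ a b, H.Adj a b → π a = π b) :
    matchPoly H = ∏ i, ∑ T ∈ univ.filter
      (fun T => IsEdgeMatching H T ∧ ∀ e ∈ T, ∀ w ∈ e, π w = i), X ^ #T := by
  have fiber_unique {e : Sym2 W} {i j : ι} (hi : ∀ w ∈ e, π w = i) (hj : ∀ w ∈ e, π w = j) :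
      i = j :=
    (hi _ e.out_fst_mem).symm.trans (hj _ e.out_fst_mem)
  rw [prod_univ_sum, matchPoly_eq_sum_isEdgeMatching]
  refine sum_nbij' (fun S i => S.filter fun e => ∀ w ∈ e, π w = i) (univ.biUnion ·)
    ?_ ?_ ?_ ?_ ?_
  · simp only [mem_filter, mem_univ, true_and, Fintype.mem_piFinset]
    exact fun S hS i => ⟨hS.mono (filter_subset _ _), fun e he => he.2⟩
  · simp only [mem_filter, mem_univ, true_and, Fintype.mem_piFinset]
    exact fun T hT => IsEdgeMatching.biUnion_univ (fun i => (hT i).1) fun i => (hT i).2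
  · intro S hS
    simp only [mem_filter, mem_univ, true_and] at hS
    exact biUnion_filter_fiber hπ hS.1
  · intro T hT
    simp only [Fintype.mem_piFinset, mem_filter, mem_univ, true_and] at hT
    funext i
    ext e
    simp only [mem_filter, mem_biUnion, mem_univ, true_and]
    exact ⟨fun ⟨⟨j, he⟩, hi⟩ => fiber_unique ((hT j).2 e he) hi ▸ he,
      fun he => ⟨⟨i, he⟩, (hT i).2 e he⟩⟩
  · intro S hS
    simp only [mem_filter, mem_univ, true_and] at hS
    rw [prod_pow_eq_pow_sum, ← card_biUnion, biUnion_filter_fiber hπ hS.1]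
    exact fun i _ j _ hij => disjoint_filter.2 fun e _ hi hj => hij (fiber_unique hi hj)

end Fibers

section DisjointUnion

variable {ι κ W : Type*} {V : ι → Type*} {U : κ → Type*}

def sigmaGraph (G : ∀ i, SimpleGraph (V i)) : SimpleGraph (Σ i, V i) :=
  ⨆ i, (G i).map (Function.Embedding.sigmaMk i)

variable {G : ∀ i, SimpleGraph (V i)}

lemma sigmaGraph_adj {x y : Σ i, V i} :
    (sigmaGraph G).Adj x y ↔ ∃ i a b, (G i).Adj a b ∧ ⟨i, a⟩ = x ∧ ⟨i, b⟩ = y := by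
  simp [sigmaGraph]

lemma sigmaGraph_adj_mk {i : ι} {a b : V i} :
    (sigmaGraph G).Adj ⟨i, a⟩ ⟨i, b⟩ ↔ (G i).Adj a b := by
  rw [sigmaGraph_adj]
  constructor
  · rintro ⟨j, a', b', h, ha, hb⟩
    obtain ⟨rfl, ha⟩ := Sigma.mk.inj_iff.1 ha
    obtain ⟨-, hb⟩ := Sigma.mk.inj_iff.1 hb
    rwa [← eq_of_heq ha, ← eq_of_heq hb]
  · exact fun h => ⟨i, a, b, h, rfl, rfl⟩

lemma sigmaGraph_fst_eq_of_adj {x y : Σ i, V i} (h : (sigmaGraph G).Adj x y) : x.1 = y.1 := by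
  obtain ⟨i, a, b, -, rfl, rfl⟩ := sigmaGraph_adj.1 h
  rfl

def sigmaMkEmbedding (i : ι) : G i ↪g sigmaGraph G where
  toEmbedding := Function.Embedding.sigmaMk i
  map_rel_iff' := sigmaGraph_adj_mk

def Iso.sigmaCongr {H : ∀ k, SimpleGraph (U k)} (e : ι ≃ κ) (F : ∀ i, G i ≃g H (e i)) :
    sigmaGraph G ≃g sigmaGraph H where
  toEquiv := Equiv.sigmaCongr e fun i => (F i).toEquiv
  map_rel_iff' := by
    rintro ⟨i, a⟩ ⟨j, b⟩
    by_cases hij : i = j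
    · subst hij
      exact sigmaGraph_adj_mk.trans ((F i).map_adj_iff.trans sigmaGraph_adj_mk.symm)
    · exact iff_of_false (fun h => hij (e.injective (sigmaGraph_fst_eq_of_adj h)))
        fun h => hij (sigmaGraph_fst_eq_of_adj h)

def isoSigmaGraphInduceFiber (H : SimpleGraph W) (π : W → ι)
    (hπ : ∀ a b, H.Adj a b → π a = π b) :
    H ≃g sigmaGraph fun i => H.induce {w | π w = i} where
  toEquiv := (Equiv.sigmaFiberEquiv π).symm
  map_rel_iff' := by
    intro a b
    rw [sigmaGraph_adj]
    constructor
    · rintro ⟨i, a', b', h, ha, hb⟩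
      obtain rfl : (a' : W) = a := congrArg (fun x => (x.2 : W)) ha
      obtain rfl : (b' : W) = b := congrArg (fun x => (x.2 : W)) hb
      exact h
    · intro h
      exact ⟨π b, ⟨a, hπ a b h⟩, ⟨b, rfl⟩, h, Sigma.subtype_ext (hπ a b h).symm rfl, rfl⟩

lemma matchPoly_sigmaGraph [Fintype ι] [∀ i, Fintype (V i)] :
    matchPoly (sigmaGraph G) = ∏ i, matchPoly (G i) := by
  rw [matchPoly_eq_prod_sum_fiber (π := Sigma.fst) fun _ _ => sigmaGraph_fst_eq_of_adj]
  refine prod_congr rfl fun i _ => (matchPoly_eq_sum_of_embedding (sigmaMkEmbedding i) ?_).symm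
  rintro ⟨j, a⟩
  refine ⟨?_, ?_⟩
  · rintro ⟨b, hb⟩
    exact (congrArg Sigma.fst hb).symm
  · rintro (rfl : j = i)
    exact ⟨a, rfl⟩

end DisjointUnion

section Substitution

lemma one_add_ratFuncX_ne_zero : (1 + RatFunc.X : RatFunc ℚ) ≠ 0 := by
  have h : (1 + X : ℚ[X]) ≠ 0 := by
    rw [add_comm, ← C_1]
    exact X_add_C_ne_zero 1
  simpa using (map_ne_zero_iff _ (RatFunc.algebraMap_injective ℚ)).2 h

lemma aeval_matchPoly_pathGraph_mul_pow :
    ∀ n : ℕ, aeval (-RatFunc.X / (1 + RatFunc.X) ^ 2 : RatFunc ℚ) (matchPoly (pathGraph n)) *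
      (1 + RatFunc.X) ^ n = ∑ i ∈ range (n + 1), RatFunc.X ^ i
  | 0 => by simp [matchPoly_pathGraph_zero]
  | 1 => by simp [matchPoly_pathGraph_one, sum_range_succ]
  | n + 2 => by
    have ht : (-RatFunc.X / (1 + RatFunc.X) ^ 2 : RatFunc ℚ) * (1 + RatFunc.X) ^ 2 =
        -RatFunc.X := div_mul_cancel₀ _ (pow_ne_zero 2 one_add_ratFuncX_ne_zero)
    have h1 := aeval_matchPoly_pathGraph_mul_pow (n + 1)
    have h0 := aeval_matchPoly_pathGraph_mul_pow n
    rw [sum_range_succ] at h1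
    rw [matchPoly_pathGraph_add_two, map_add, map_mul, aeval_X, sum_range_succ, sum_range_succ]
    linear_combination (1 + RatFunc.X) * h1 +
      (-RatFunc.X / (1 + RatFunc.X) ^ 2 : RatFunc ℚ) * (1 + RatFunc.X) ^ 2 * h0 +
      (∑ i ∈ range (n + 1), RatFunc.X ^ i) * ht

lemma algebraMap_prod_geom_sum {ι : Type*} [Fintype ι] (n : ι → ℕ) :
    algebraMap ℚ[X] (RatFunc ℚ) (∏ i, ∑ k ∈ range (n i + 1), X ^ k) =
      aeval (-RatFunc.X / (1 + RatFunc.X) ^ 2 : RatFunc ℚ) (∏ i, matchPoly (pathGraph (n i))) *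
        (1 + RatFunc.X) ^ ∑ i, n i := by
  simp only [map_prod, map_sum, map_pow, RatFunc.algebraMap_X,
    ← aeval_matchPoly_pathGraph_mul_pow, prod_mul_distrib, prod_pow_eq_pow_sum]

lemma prod_geom_sum_eq_of_prod_matchPoly_pathGraph_eq {ι κ : Type*} [Fintype ι] [Fintype κ]
    {n : ι → ℕ} {m : κ → ℕ} (hsum : ∑ i, n i = ∑ j, m j)
    (hprod : ∏ i, matchPoly (pathGraph (n i)) = ∏ j, matchPoly (pathGraph (m j))) :
    ∏ i, ∑ k ∈ range (n i + 1), (X : ℚ[X]) ^ k = ∏ j, ∑ k ∈ range (m j + 1), X ^ k := by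
  apply RatFunc.algebraMap_injective ℚ
  rw [algebraMap_prod_geom_sum, algebraMap_prod_geom_sum, hprod, hsum]

end Substitution

section RootsOfUnity

variable {K : Type*} [Field K]

lemma geom_sum_X_ne_zero (m : ℕ) : (∑ i ∈ range (m + 1), X ^ i : K[X]) ≠ 0 := fun h => by
  simpa [eval_finsetSum] using congrArg (eval 0) h

variable [CharZero K] {ζ : K} {k : ℕ}

lemma rootMultiplicity_geom_sum (hζ : IsPrimitiveRoot ζ k) (hk : 2 ≤ k) (m : ℕ) :
    rootMultiplicity ζ (∑ i ∈ range (m + 1), X ^ i) = if k ∣ m + 1 then 1 else 0 := by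
  have hmul : (∑ i ∈ range (m + 1), X ^ i) * (X - 1) = (X ^ (m + 1) - C 1 : K[X]) := by
    rw [geom_sum_mul, C_1]
  have hsep : (∑ i ∈ range (m + 1), X ^ i : K[X]).Separable :=
    (separable_X_pow_sub_C 1 (by exact_mod_cast m.succ_ne_zero) one_ne_zero).of_dvd
      (Dvd.intro _ hmul)
  have hroot : IsRoot (∑ i ∈ range (m + 1), X ^ i) ζ ↔ k ∣ m + 1 := by
    have hζ1 : ζ - 1 ≠ 0 := sub_ne_zero.2 (hζ.ne_one (by omega))
    have := congrArg (eval ζ) hmul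
    simp only [eval_mul, eval_sub, eval_X, eval_one, eval_pow, eval_C] at this
    rw [IsRoot.def, ← hζ.pow_eq_one_iff_dvd, ← sub_eq_zero (a := ζ ^ (m + 1)), ← this,
      mul_eq_zero, or_iff_left hζ1]
  split_ifs with h
  · exact le_antisymm (rootMultiplicity_le_one_of_separable hsep ζ)
      ((rootMultiplicity_pos (geom_sum_X_ne_zero m)).2 (hroot.2 h))
  · exact rootMultiplicity_eq_zero (mt hroot.1 h)

lemma rootMultiplicity_prod_geom_sum {ι : Type*} [Fintype ι] (hζ : IsPrimitiveRoot ζ k)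
    (hk : 2 ≤ k) (n : ι → ℕ) :
    rootMultiplicity ζ (∏ i, ∑ j ∈ range (n i + 1), X ^ j) = #{i | k ∣ n i + 1} := by
  rw [← count_roots, roots_prod _ _ (prod_ne_zero_iff.2 fun i _ => geom_sum_X_ne_zero _),
    Multiset.count_bind]
  simp_rw [count_roots, rootMultiplicity_geom_sum hζ hk]
  exact sum_boole _ _

end RootsOfUnity

namespace Multiset

lemma filter_dvd_eq_filter_eq {ρ : Multiset ℕ} {B : ℕ} (hρ : ∀ a ∈ ρ, 0 < a ∧ a ≤ B) :
    ρ.filter (B ∣ ·) = ρ.filter (· = B) :=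
  filter_congr fun a ha => ⟨fun hd => le_antisymm (hρ a ha).2 (Nat.le_of_dvd (hρ a ha).1 hd),
    fun e => e ▸ dvd_refl _⟩

lemma eq_of_card_filter_dvd_eq_of_le {B : ℕ} (hB : 1 ≤ B) {μ ν : Multiset ℕ}
    (hμ : ∀ a ∈ μ, 2 ≤ a ∧ a ≤ B) (hν : ∀ a ∈ ν, 2 ≤ a ∧ a ≤ B)
    (h : ∀ k, 2 ≤ k → card (μ.filter (k ∣ ·)) = card (ν.filter (k ∣ ·))) : μ = ν := by
  induction B, hB using Nat.le_induction generalizing μ ν with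
  | base =>
    obtain rfl : μ = 0 := eq_zero_of_forall_notMem fun a ha => by have := hμ a ha; omega
    obtain rfl : ν = 0 := eq_zero_of_forall_notMem fun a ha => by have := hν a ha; omega
    rfl
  | succ B hB ih =>
    have htop : μ.filter (· = B + 1) = ν.filter (· = B + 1) := by
      have hcard := h (B + 1) (by omega)
      rw [filter_dvd_eq_filter_eq fun a ha => ⟨by have := hμ a ha; omega, (hμ a ha).2⟩,
        filter_dvd_eq_filter_eq fun a ha => ⟨by have := hν a ha; omega, (hν a ha).2⟩] at hcard
      have hrep (ρ : Multiset ℕ) :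
          ρ.filter (· = B + 1) = replicate (card (ρ.filter (· = B + 1))) (B + 1) :=
        eq_replicate.2 ⟨rfl, fun b hb => (mem_filter.1 hb).2⟩
      rw [hrep μ, hrep ν, hcard]
    have below {ρ : Multiset ℕ} (hρ : ∀ a ∈ ρ, 2 ≤ a ∧ a ≤ B + 1) :
        ∀ a ∈ ρ.filter (fun a => ¬a = B + 1), 2 ≤ a ∧ a ≤ B := fun a ha => by
      obtain ⟨ha, hne⟩ := mem_filter.1 ha
      have := hρ a ha
      omega
    have hrest : μ.filter (fun a => ¬a = B + 1) = ν.filter (fun a => ¬a = B + 1) := by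
      refine ih (below hμ) (below hν) fun k hk => ?_
      have := h k hk
      rw [← filter_add_not (· = B + 1) μ, ← filter_add_not (· = B + 1) ν, filter_add,
        filter_add, card_add, card_add, htop] at this
      omega
    rw [← filter_add_not (· = B + 1) μ, ← filter_add_not (· = B + 1) ν, htop, hrest]

lemma eq_of_card_filter_dvd_eq {μ ν : Multiset ℕ} (hμ : ∀ a ∈ μ, 2 ≤ a)
    (hν : ∀ a ∈ ν, 2 ≤ a)
    (h : ∀ k, 2 ≤ k → card (μ.filter (k ∣ ·)) = card (ν.filter (k ∣ ·))) : μ = ν := by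
  refine eq_of_card_filter_dvd_eq_of_le (B := μ.sum + ν.sum + 1) (by omega)
    (fun a ha => ⟨hμ a ha, ?_⟩) (fun a ha => ⟨hν a ha, ?_⟩) h
  · have := le_sum_of_mem ha
    omega
  · have := le_sum_of_mem ha
    omega

end Multiset

lemma exists_equiv_of_map_univ_eq {ι κ α : Type*} [Fintype ι] [Fintype κ] {f : ι → α}
    {g : κ → α} (h : univ.val.map f = univ.val.map g) : ∃ e : ι ≃ κ, f = g ∘ e := by
  have hfiber (a : α) : Fintype.card {i // f i = a} = Fintype.card {j // g j = a} := by
    have := congrArg (Multiset.count a) h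
    simp only [Multiset.count_map] at this
    simp only [Fintype.card_subtype, card_def, filter_val]
    simpa only [eq_comm] using this
  exact ⟨Equiv.ofFiberEquiv fun a => Fintype.equivOfCardEq (hfiber a),
    funext fun i => (Equiv.ofFiberEquiv_map _ i).symm⟩

lemma exists_equiv_of_prod_matchPoly_pathGraph_eq {ι κ : Type*} [Fintype ι] [Fintype κ]
    {n : ι → ℕ} {m : κ → ℕ} (hn : ∀ i, n i ≠ 0) (hm : ∀ j, m j ≠ 0)
    (hsum : ∑ i, n i = ∑ j, m j)
    (hprod : ∏ i, matchPoly (pathGraph (n i)) = ∏ j, matchPoly (pathGraph (m j))) :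
    ∃ e : ι ≃ κ, n = m ∘ e := by
  have hgeom := prod_geom_sum_eq_of_prod_matchPoly_pathGraph_eq hsum hprod
  have hdvd (k : ℕ) (hk : 2 ≤ k) : #{i | k ∣ n i + 1} = #{j | k ∣ m j + 1} := by
    have hζ := Complex.isPrimitiveRoot_exp k (by omega)
    rw [← rootMultiplicity_prod_geom_sum hζ hk, ← rootMultiplicity_prod_geom_sum hζ hk]
    congr 1
    simpa [Polynomial.map_prod, Polynomial.map_sum] using
      congrArg (Polynomial.map (algebraMap ℚ ℂ)) hgeom
  have hmap : univ.val.map (n · + 1) = univ.val.map (m · + 1) := by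
    refine Multiset.eq_of_card_filter_dvd_eq ?_ ?_ fun k hk => ?_
    · simpa [Nat.one_le_iff_ne_zero] using hn
    · simpa [Nat.one_le_iff_ne_zero] using hm
    · simpa [Multiset.filter_map, card_def, filter_val] using hdvd k hk
  obtain ⟨e, he⟩ := exists_equiv_of_map_univ_eq hmap
  exact ⟨e, funext fun i => by simpa using congrFun he i⟩

lemma IsPathUnion.exists_iso_sigmaGraph_pathGraph {V : Type*} {G : SimpleGraph V}
    (hG : IsPathUnion G) : ∃ n : G.ConnectedComponent → ℕ,
      (∀ c, n c ≠ 0) ∧ Nonempty (G ≃g sigmaGraph fun c => pathGraph (n c)) := by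
  choose n φ using hG
  refine ⟨n, fun c => ?_, ⟨(isoSigmaGraphInduceFiber G G.connectedComponentMk
    fun _ _ h => ConnectedComponent.sound h.reachable).trans
      (Iso.sigmaCongr (Equiv.refl _) fun c => (φ c).some)⟩⟩
  obtain ⟨v, hv⟩ := c.exists_rep
  exact ((φ c).some ⟨v, hv⟩).pos.ne'

/-- A finite disjoint union of paths is determined up to isomorphism by its number of
vertices and its matching-generating polynomial. -/
theorem stmt12 {V W : Type*} [Fintype V] [Fintype W]
    (G : SimpleGraph V) (H : SimpleGraph W)
    (hG : IsPathUnion G) (hH : IsPathUnion H)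
    (hcard : Fintype.card V = Fintype.card W)
    (hM : matchPoly G = matchPoly H) :
    Nonempty (G ≃g H) := by
  obtain ⟨n, hn, ⟨φ⟩⟩ := hG.exists_iso_sigmaGraph_pathGraph
  obtain ⟨m, hm, ⟨ψ⟩⟩ := hH.exists_iso_sigmaGraph_pathGraph
  have hsum : ∑ c, n c = ∑ d, m d := by
    simpa [Fintype.card_congr φ.toEquiv, Fintype.card_congr ψ.toEquiv] using hcard
  have hprod : ∏ c, matchPoly (pathGraph (n c)) = ∏ d, matchPoly (pathGraph (m d)) := by
    rw [← matchPoly_sigmaGraph, ← matchPoly_sigmaGraph, ← matchPoly_congr φ,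
      ← matchPoly_congr ψ, hM]
  obtain ⟨e, rfl⟩ := exists_equiv_of_prod_matchPoly_pathGraph_eq hn hm hsum hprod
  exact ⟨φ.trans ((Iso.sigmaCongr e fun _ => Iso.refl).trans ψ.symm)⟩
end

section
/- The polynomials f_2(t), f_3(t), …, f_n(t) (matching-generating polynomials of paths on 2, …, n vertices) are multiplicatively independent: if f_2^{c_2}···f_n^{c_n} = f_2^{d_2}···f_n^{d_n} with nonnegative integers c_j, d_j, then c_j = d_j for all j. -/
open Classical Polynomial

/-!
Splitting the matchings of a path according to whether they use the last edge gives the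
recurrence `f (n + 2) = f (n + 1) + t * f n`. If `2 ρ cos θ = 1`, it turns into the Chebyshev
identity `sin θ * f j (-ρ²) = ρ ^ j * sin ((j + 1) θ)`, so for `θ = π / (N + 1)` the real number
`-ρ²` is a root of `f N` and of no `f j` with `j < N`. Comparing the multiplicity of this root on
both sides of an identity between products of powers fixes the exponent of the largest index;
cancelling that factor, the other exponents follow by descending induction.
-/

open Finset

namespace Polynomial

theorem rootMultiplicity_pow_mul_of_not_isRoot {R : Type*} [CommRing R] [IsDomain R]
    {p q : R[X]} {t : R} (hp : p ≠ 0) (hq : ¬q.IsRoot t) (k : ℕ) :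
    rootMultiplicity t (p ^ k * q) = k * rootMultiplicity t p := by
  have hq0 : q ≠ 0 := fun h => hq (h ▸ eval_zero)
  rw [← count_roots, roots_mul (mul_ne_zero (pow_ne_zero k hp) hq0), roots_pow,
    Multiset.count_add, Multiset.count_nsmul, count_roots, count_roots,
    rootMultiplicity_eq_zero hq, add_zero]

theorem eq_of_prod_pow_eq_prod_pow {R ι : Type*} [CommRing R] [IsDomain R] [LinearOrder ι]
    {s : Finset ι} {p : ι → R[X]} (hp : ∀ j ∈ s, p j ≠ 0)
    (hroot : ∀ i ∈ s, ∃ t, (p i).IsRoot t ∧ ∀ j ∈ s, j < i → ¬(p j).IsRoot t)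
    {c d : ι → ℕ} (h : ∏ j ∈ s, p j ^ c j = ∏ j ∈ s, p j ^ d j) : ∀ j ∈ s, c j = d j := by
  induction s using Finset.induction_on_max with
  | empty => simp
  | insert a s hlt ih =>
    have ha : a ∉ s := fun h => lt_irrefl a (hlt a h)
    obtain ⟨t, hta, hts⟩ := hroot a (mem_insert_self a s)
    have hpa : p a ≠ 0 := hp a (mem_insert_self a s)
    have hrest (e : ι → ℕ) : ¬(∏ j ∈ s, p j ^ e j).IsRoot t := by
      simp only [IsRoot, eval_prod, eval_pow, prod_eq_zero_iff, pow_eq_zero_iff', not_exists]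
      exact fun j ⟨hj, hj0, _⟩ => hts j (mem_insert_of_mem hj) (hlt j hj) hj0
    rw [prod_insert ha, prod_insert ha] at h
    have hca : c a = d a := by
      have := congrArg (rootMultiplicity t) h
      rw [rootMultiplicity_pow_mul_of_not_isRoot hpa (hrest c),
        rootMultiplicity_pow_mul_of_not_isRoot hpa (hrest d)] at this
      exact Nat.eq_of_mul_eq_mul_right ((rootMultiplicity_pos hpa).2 hta) this
    rw [hca] at h
    have hroot_s : ∀ i ∈ s, ∃ t, (p i).IsRoot t ∧ ∀ j ∈ s, j < i → ¬(p j).IsRoot t := by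
      intro i hi
      obtain ⟨t, ht, hlt'⟩ := hroot i (mem_insert_of_mem hi)
      exact ⟨t, ht, fun j hj => hlt' j (mem_insert_of_mem hj)⟩
    have hs := ih (fun j hj => hp j (mem_insert_of_mem hj)) hroot_s
      (mul_left_cancel₀ (pow_ne_zero _ hpa) h)
    intro j hj
    rcases mem_insert.1 hj with rfl | hj
    exacts [hca, hs j hj]

end Polynomial

namespace SimpleGraph

variable {V W : Type*}

def IsEdgeMatching (G : SimpleGraph V) (S : Finset (Sym2 V)) : Prop :=
  ↑S ⊆ G.edgeSet ∧ (S : Set (Sym2 V)).Pairwise (fun e f => ∀ v, v ∈ e → v ∉ f)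

/-- The predicate is spelled out rather than written `G.IsEdgeMatching`, so that the classical
decidability instance of the filter is the one in `matchPoly` and `matchPoly_eq_sum_matchings`
holds by `rfl`. -/
noncomputable def matchings [Fintype V] (G : SimpleGraph V) : Finset (Finset (Sym2 V)) :=
  univ.filter fun S =>
    ↑S ⊆ G.edgeSet ∧ (S : Set (Sym2 V)).Pairwise (fun e f => ∀ v, v ∈ e → v ∉ f)

theorem matchPoly_eq_sum_matchings [Fintype V] (G : SimpleGraph V) :
    matchPoly G = ∑ S ∈ G.matchings, X ^ S.card := rfl

@[simp]
theorem mem_matchings [Fintype V] {G : SimpleGraph V} {S : Finset (Sym2 V)} :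
    S ∈ G.matchings ↔ G.IsEdgeMatching S := by
  simp [matchings, IsEdgeMatching]

theorem matchPoly_bot [Fintype V] : matchPoly (⊥ : SimpleGraph V) = 1 := by
  have : (⊥ : SimpleGraph V).matchings = {∅} := by
    ext S
    simp +contextual [IsEdgeMatching, Set.subset_empty_iff]
  simp [matchPoly_eq_sum_matchings, this]

theorem matchPoly_eval_zero [Fintype V] (G : SimpleGraph V) : (matchPoly G).eval 0 = 1 := by
  rw [matchPoly_eq_sum_matchings, eval_finsetSum]
  refine (sum_eq_single_of_mem ∅ (by simp [IsEdgeMatching]) fun S _ hS => ?_).trans (by simp)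
  simp [card_ne_zero.2 (nonempty_iff_ne_empty.2 hS)]

theorem matchPoly_ne_zero [Fintype V] (G : SimpleGraph V) : matchPoly G ≠ 0 := fun h => by
  simpa [h] using matchPoly_eval_zero G

theorem isEdgeMatching_insert_iff [DecidableEq V] {G : SimpleGraph V} {S : Finset (Sym2 V)}
    {e : Sym2 V} :
    G.IsEdgeMatching (insert e S) ↔
      e ∈ G.edgeSet ∧ G.IsEdgeMatching S ∧ ∀ x ∈ S, x ≠ e → ∀ v ∈ e, v ∉ x := by
  have : Std.Symm (fun e f : Sym2 V => ∀ v, v ∈ e → v ∉ f) :=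
    ⟨fun _ _ h v hb ha => h v ha hb⟩
  simp only [IsEdgeMatching, coe_insert, Set.insert_subset_iff, Set.pairwise_insert_of_symm,
    mem_coe]
  grind

theorem isEdgeMatching_map_iff (H : SimpleGraph W) (f : V ↪ W) (S : Finset (Sym2 V)) :
    H.IsEdgeMatching (S.map f.sym2Map) ↔ (H.comap f).IsEdgeMatching S := by
  have hedge : f.sym2Map ⁻¹' H.edgeSet = (H.comap f).edgeSet := by
    ext e
    induction e using Sym2.ind with
    | _ a b => simp
  have hdisj (x y : Sym2 V) :
      (∀ w ∈ f.sym2Map x, w ∉ f.sym2Map y) ↔ ∀ v ∈ x, v ∉ y := by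
    simp only [Function.Embedding.sym2Map_apply, Sym2.mem_map]
    grind
  rw [IsEdgeMatching, IsEdgeMatching, coe_map, Set.image_subset_iff, hedge,
    f.sym2Map.injective.injOn.pairwise_image]
  simp only [Set.Pairwise, Function.onFun, hdisj]

theorem exists_map_eq_of_forall_mem_range [Fintype V] (f : V ↪ W) {S : Finset (Sym2 W)}
    (hS : ∀ e ∈ S, ∀ w ∈ e, w ∈ Set.range f) : ∃ T : Finset (Sym2 V), T.map f.sym2Map = S := by
  suffices S ⊆ univ.map f.sym2Map by
    obtain ⟨T, -, rfl⟩ := subset_map_iff.1 this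
    exact ⟨T, rfl⟩
  intro e he
  induction e using Sym2.ind with
  | _ a b =>
    obtain ⟨a, rfl⟩ := hS _ he a (Sym2.mem_mk_left a b)
    obtain ⟨b, rfl⟩ := hS _ he b (Sym2.mem_mk_right _ b)
    exact mem_map_of_mem _ (mem_univ s(a, b))

theorem sum_filter_matchings_forall_mem_range [Fintype V] [Fintype W] (H : SimpleGraph W)
    (f : V ↪ W) :
    ∑ S ∈ H.matchings with ∀ e ∈ S, ∀ w ∈ e, w ∈ Set.range f, (X : ℚ[X]) ^ S.card =
      matchPoly (H.comap f) := by
  rw [matchPoly_eq_sum_matchings]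
  symm
  refine sum_nbij (fun T => T.map f.sym2Map) (fun T hT => ?_) (Finset.map_injective _).injOn
    (fun S hS => ?_) (fun T _ => by rw [card_map])
  · rw [mem_filter, mem_matchings, isEdgeMatching_map_iff, ← mem_matchings]
    refine ⟨hT, ?_⟩
    simp only [mem_map, Function.Embedding.sym2Map_apply]
    rintro _ ⟨x, -, rfl⟩ w hw
    obtain ⟨v, -, rfl⟩ := Sym2.mem_map.1 hw
    exact Set.mem_range_self v
  · obtain ⟨hS, hrange⟩ := mem_filter.1 hS
    obtain ⟨T, rfl⟩ := exists_map_eq_of_forall_mem_range f hrange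
    exact ⟨T, by simpa [isEdgeMatching_map_iff] using hS, rfl⟩

theorem pathGraph_comap_castLE {k m : ℕ} (h : k ≤ m) :
    (pathGraph m).comap (Fin.castLEEmb h) = pathGraph k := by
  ext
  simp [pathGraph_adj]

theorem sum_filter_matchings_pathGraph_lt {k m : ℕ} (h : k ≤ m) :
    ∑ S ∈ (pathGraph m).matchings with ∀ e ∈ S, ∀ v ∈ e, v.val < k, (X : ℚ[X]) ^ S.card =
      matchPoly (pathGraph k) := by
  rw [← pathGraph_comap_castLE h, ← sum_filter_matchings_forall_mem_range]
  simp [Fin.range_castLE]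

def topEdge (n : ℕ) : Sym2 (Fin (n + 2)) := s(⟨n, by omega⟩, ⟨n + 1, by omega⟩)

theorem mem_topEdge {n : ℕ} {v : Fin (n + 2)} : v ∈ topEdge n ↔ v.val = n ∨ v.val = n + 1 := by
  simp [topEdge, Fin.ext_iff]

theorem topEdge_mem_edgeSet (n : ℕ) : topEdge n ∈ (pathGraph (n + 2)).edgeSet := by
  simp [topEdge, pathGraph_adj]

theorem eq_topEdge_of_mem_edgeSet {n : ℕ} {e : Sym2 (Fin (n + 2))}
    (he : e ∈ (pathGraph (n + 2)).edgeSet) {v : Fin (n + 2)} (hv : v ∈ e) (hvn : v.val = n + 1) :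
    e = topEdge n := by
  induction e using Sym2.ind with
  | _ a b =>
    simp only [mem_edgeSet, pathGraph_adj] at he
    simp only [topEdge, Sym2.eq_iff, Fin.ext_iff]
    rcases Sym2.mem_iff.1 hv with rfl | rfl <;> omega

theorem topEdge_notMem_iff {n : ℕ} {S : Finset (Sym2 (Fin (n + 2)))}
    (hS : ↑S ⊆ (pathGraph (n + 2)).edgeSet) :
    topEdge n ∉ S ↔ ∀ e ∈ S, ∀ v ∈ e, v.val < n + 1 := by
  refine ⟨fun htop e he v hv => ?_, fun h htop => ?_⟩
  · by_contra! hvn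
    exact htop (eq_topEdge_of_mem_edgeSet (hS he) hv (by omega) ▸ he)
  · simpa using h _ htop ⟨n + 1, by omega⟩ (mem_topEdge.2 (Or.inr rfl))

theorem sum_filter_topEdge_mem (n : ℕ) :
    ∑ S ∈ (pathGraph (n + 2)).matchings with topEdge n ∈ S, (X : ℚ[X]) ^ S.card =
      X * matchPoly (pathGraph n) := by
  rw [← sum_filter_matchings_pathGraph_lt (by omega : n ≤ n + 2), mul_sum]
  have htop {T : Finset (Sym2 (Fin (n + 2)))} (hT : ∀ e ∈ T, ∀ v ∈ e, v.val < n) :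
      topEdge n ∉ T := fun h => by
    simpa using hT _ h ⟨n, by omega⟩ (mem_topEdge.2 (Or.inl rfl))
  symm
  refine sum_nbij' (insert (topEdge n)) (fun S => S.erase (topEdge n)) (fun T hT => ?_)
    (fun S hS => ?_) (fun T hT => erase_insert (htop (mem_filter.1 hT).2))
    (fun S hS => insert_erase (mem_filter.1 hS).2)
    (fun T hT => by rw [card_insert_of_notMem (htop (mem_filter.1 hT).2), pow_succ', mul_comm])
  · obtain ⟨hT, hlt⟩ := mem_filter.1 hT
    refine mem_filter.2 ⟨mem_matchings.2 (isEdgeMatching_insert_iff.2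
      ⟨topEdge_mem_edgeSet n, mem_matchings.1 hT, fun x hx _ v hv hvx => ?_⟩), mem_insert_self _ _⟩
    have := hlt x hx v hvx
    rcases mem_topEdge.1 hv with h | h <;> omega
  · obtain ⟨hS, hmem⟩ := mem_filter.1 hS
    rw [mem_matchings, ← insert_erase hmem, isEdgeMatching_insert_iff] at hS
    obtain ⟨-, hmatch, hdisj⟩ := hS
    refine mem_filter.2 ⟨mem_matchings.2 hmatch, fun x hx v hvx => ?_⟩
    have hvtop : v ∉ topEdge n := fun hv => hdisj x hx (ne_of_mem_erase hx) v hv hvx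
    rw [mem_topEdge] at hvtop
    omega

theorem matchPoly_pathGraph_add_two (n : ℕ) :
    matchPoly (pathGraph (n + 2)) =
      matchPoly (pathGraph (n + 1)) + X * matchPoly (pathGraph n) := by
  rw [matchPoly_eq_sum_matchings, ← sum_filter_topEdge_mem,
    ← sum_filter_matchings_pathGraph_lt (by omega : n + 1 ≤ n + 2),
    ← sum_filter_not_add_sum_filter _ (topEdge n ∈ ·)]
  congr 1
  exact sum_congr (filter_congr fun S hS => topEdge_notMem_iff (mem_matchings.1 hS).1)
    fun _ _ => rfl

theorem pathGraph_eq_bot_of_le_one {m : ℕ} (hm : m ≤ 1) : pathGraph m = ⊥ := by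
  ext u v
  simp only [pathGraph_adj, bot_adj, iff_false]
  omega

open Real in
theorem sin_mul_aeval_matchPoly_pathGraph {ρ θ : ℝ} (h : 2 * ρ * cos θ = 1) (j : ℕ) :
    sin θ * aeval (-ρ ^ 2) (matchPoly (pathGraph j)) = ρ ^ j * sin ((j + 1) * θ) := by
  induction j using Nat.twoStepInduction with
  | zero => simp [pathGraph_eq_bot_of_le_one, matchPoly_bot]
  | one =>
    simp only [pathGraph_eq_bot_of_le_one le_rfl, matchPoly_bot, map_one]
    rw [Nat.cast_one, one_add_one_eq_two, sin_two_mul]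
    linear_combination -sin θ * h
  | more j ih₀ ih₁ =>
    have hsin :
        sin ((j + 2 + 1) * θ) + sin ((j + 1) * θ) = 2 * cos θ * sin ((j + 1 + 1) * θ) := by
      have hadd : (j + 2 + 1) * θ = (j + 1 + 1) * θ + θ := by ring
      have hsub : (j + 1) * θ = (j + 1 + 1) * θ - θ := by ring
      rw [hadd, hsub, sin_add, sin_sub]
      ring
    rw [matchPoly_pathGraph_add_two, map_add, map_mul, aeval_X]
    push_cast at ih₁ ⊢
    linear_combination
      ih₁ - ρ ^ 2 * ih₀ - ρ ^ (j + 2) * hsin - ρ ^ (j + 1) * sin ((j + 1 + 1) * θ) * h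

open Real in
theorem exists_aeval_matchPoly_pathGraph_eq_zero {N : ℕ} (hN : 2 ≤ N) :
    ∃ t : ℝ, aeval t (matchPoly (pathGraph N)) = 0 ∧
      ∀ j < N, aeval t (matchPoly (pathGraph j)) ≠ 0 := by
  set θ := π / (N + 1) with hθdef
  have hθ : 0 < θ := by positivity
  have hNθ : (N + 1) * θ = π := by rw [hθdef]; field_simp
  have hθ2 : θ < π / 2 := by
    have : (2 : ℝ) ≤ N := by exact_mod_cast hN
    rw [div_lt_div_iff₀ (by positivity) two_pos]
    nlinarith [pi_pos]
  have hsinθ : 0 < sin θ := sin_pos_of_pos_of_lt_pi hθ (by linarith)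
  have hcosθ : 0 < cos θ := cos_pos_of_mem_Ioo ⟨by linarith, hθ2⟩
  set ρ := (2 * cos θ)⁻¹ with hρdef
  have hρ : 0 < ρ := by positivity
  have hform := sin_mul_aeval_matchPoly_pathGraph (ρ := ρ) (θ := θ) (by rw [hρdef]; field_simp)
  refine ⟨-ρ ^ 2, ?_, fun j hj hzero => ?_⟩
  · simpa [hNθ, hsinθ.ne'] using hform N
  · have hj' : ((j : ℝ) + 1) * θ < π := by
      rw [← hNθ]
      gcongr
    have := hform j
    rw [hzero, mul_zero] at this
    exact (mul_pos (pow_pos hρ j) (sin_pos_of_pos_of_lt_pi (by positivity) hj')).ne' this.symm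

end SimpleGraph

/-- The matching-generating polynomials `f_2, …, f_n` of paths are multiplicatively
independent: equal products of powers force equal exponents. -/
theorem stmt13 (n : ℕ) (c d : ℕ → ℕ)
    (h : ∏ j ∈ Finset.Icc 2 n, (matchPoly (SimpleGraph.pathGraph j)) ^ c j
       = ∏ j ∈ Finset.Icc 2 n, (matchPoly (SimpleGraph.pathGraph j)) ^ d j) :
    ∀ j ∈ Finset.Icc 2 n, c j = d j := by
  set p : ℕ → ℝ[X] := fun j => (matchPoly (SimpleGraph.pathGraph j)).map (algebraMap ℚ ℝ)
  refine eq_of_prod_pow_eq_prod_pow (p := p)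
    (fun j _ => Polynomial.map_ne_zero (SimpleGraph.matchPoly_ne_zero _)) (fun i hi => ?_) ?_
  · obtain ⟨t, ht, hlt⟩ := SimpleGraph.exists_aeval_matchPoly_pathGraph_eq_zero (mem_Icc.1 hi).1
    exact ⟨t, by simpa [p, eval_map_algebraMap] using ht,
      fun j _ hj => by simpa [p, eval_map_algebraMap] using hlt j hj⟩
  · simpa only [p, ← Polynomial.map_pow, ← Polynomial.map_prod] using
      congrArg (Polynomial.map (algebraMap ℚ ℝ)) h
end
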